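/- arXiv:1506.03927 — 6 statements merged into one kernel-verified Lean document; each statement's English description precedes it below -/
import Mathlib

section
/- For a finite set I partitioned into disjoint nonempty sets A, B and C = I \ (A ∪ B), and a : I → ℝ, one has max_{i∈A∪C} a_i + max_{i∈B∪C} a_i − max_{i∈I} a_i − max_{i∈C} a_i = [min(max_{i∈A} a_i, max_{i∈B} a_i) − max_{j∈C} a_j]_+, where [z]_+ = max(z,0) and max over the empty set is taken to be 0 (assume a_i ≥ 0), provided C is nonempty; if C is empty the left side (with max_∅ = 0 and a_i ≥ 0) equals min(max_{i∈A} a_i, max_{i∈B} a_i). -/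
open Finset

/-- Maximum of a nonnegative function over a finite set, with the convention that the
maximum over the empty set is `0`. -/
noncomputable def fmax {ι : Type*} (S : Finset ι) (a : ι → ℝ) : ℝ := S.fold max 0 a

/-!
Since `fmax` turns unions into maxima, the identity reduces to one about three numbers
`x = max_A a`, `y = max_B a`, `z = max_C a`. Writing `u = max x z` and `v = max y z`, distributivity
gives `max u v = max (max x y) z` and `min u v = max (min x y) z`, so `u + v = min u v + max u v`
turns the left side into `max (min x y) z - z = max (min x y - z) 0`.
-/

lemma fmax_le_iff {ι : Type*} {S : Finset ι} {a : ι → ℝ} {c : ℝ} :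
    fmax S a ≤ c ↔ 0 ≤ c ∧ ∀ i ∈ S, a i ≤ c :=
  Finset.fold_max_le c

lemma fmax_union {ι : Type*} [DecidableEq ι] (S T : Finset ι) (a : ι → ℝ) :
    fmax (S ∪ T) a = max (fmax S a) (fmax T a) :=
  eq_of_forall_ge_iff fun c => by
    simp only [fmax_le_iff, max_le_iff, forall_mem_union]
    tauto

lemma max_add_max_eq_max_max_add_max_min {α : Type*} [LinearOrder α] [AddCommSemigroup α]
    (x y z : α) :
    max x z + max y z = max (max x y) z + max (min x y) z := by
  rw [max_min_distrib_right, sup_sup_distrib_right, add_comm (max (max x z) _), min_add_max]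

lemma max_add_max_sub_max_max_sub {α : Type*} [AddCommGroup α] [LinearOrder α]
    [IsOrderedAddMonoid α] (x y z : α) :
    max x z + max y z - max (max x y) z - z = max (min x y - z) 0 := by
  rw [max_add_max_eq_max_max_add_max_min, add_sub_cancel_left, ← max_sub_sub_right, sub_self]

theorem max_identity_three_blocks_general {ι : Type*} [DecidableEq ι]
    (I A B : Finset ι)
    (hAI : A ⊆ I) (hBI : B ⊆ I)
    (C : Finset ι) (hC : C = I \ (A ∪ B))
    (a : ι → ℝ) :
    fmax (A ∪ C) a + fmax (B ∪ C) a - fmax I a - fmax C a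
      = max (min (fmax A a) (fmax B a) - fmax C a) 0 := by
  have hI : I = A ∪ B ∪ C := by
    rw [hC, union_sdiff_of_subset (union_subset hAI hBI)]
  rw [hI, fmax_union, fmax_union, fmax_union, fmax_union]
  exact max_add_max_sub_max_max_sub _ _ _

/-- For a finite set `I` partitioned into disjoint nonempty `A`, `B` and `C = I \ (A ∪ B)`,
and nonnegative `a : ι → ℝ`,
`max_{A∪C} a + max_{B∪C} a − max_I a − max_C a = [min(max_A a, max_B a) − max_C a]_+`,
with the convention that the maximum over the empty set is `0` (this single identity covers
both the case `C ≠ ∅` and the case `C = ∅`, where it reads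
`max_A a + max_B a − max_I a = min(max_A a, max_B a)`). -/
theorem max_identity_three_blocks {ι : Type*} [DecidableEq ι]
    (I A B : Finset ι) (hA : A.Nonempty) (hB : B.Nonempty)
    (hAB : Disjoint A B) (hAI : A ⊆ I) (hBI : B ⊆ I)
    (C : Finset ι) (hC : C = I \ (A ∪ B))
    (a : ι → ℝ) (ha : ∀ i, 0 ≤ a i) :
    fmax (A ∪ C) a + fmax (B ∪ C) a - fmax I a - fmax C a
      = max (min (fmax A a) (fmax B a) - fmax C a) 0 :=
  max_identity_three_blocks_general I A B hAI hBI C hC a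
end

section
/- For a simple max-stable random vector X = (X_i)_{i∈I} with exponent function V, the subvectors X_A and X_B (for disjoint nonempty A, B ⊆ I) are independent if and only if V^A(x_A) + V^B(x_B) = V^{A∪B}(x_{A∪B}) for all x ∈ (0,∞)^{A∪B}, i.e. if and only if χ_{A,B} ≡ 0. -/
open Finset MeasureTheory ProbabilityTheory

/-! Independence of `X_A` and `X_B` amounts to factorization of their joint distribution
function, because the boxes `Iic a` form a generating π-system of the Borel σ-algebra of `ℝ^A`.
The margins are unit Fréchet, so the coordinates are almost surely positive and factorization
need only be checked at positive thresholds, where the max-stable representation turns it into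
`exp (-V^{A∪B}) = exp (-V^A) * exp (-V^B)`. -/

lemma isCountablySpanning_range_Iic_real :
    IsCountablySpanning (Set.range (Set.Iic : ℝ → Set ℝ)) :=
  ⟨fun n => Set.Iic (n : ℝ), fun _ => Set.mem_range_self _,
    Set.eq_univ_of_forall fun x => Set.mem_iUnion.2 (exists_nat_ge x)⟩

lemma MeasurableSpace.pi_eq_generateFrom_range_Iic {α : Type*} [Finite α] :
    (MeasurableSpace.pi : MeasurableSpace (α → ℝ)) = generateFrom (Set.range Set.Iic) := by
  rw [← generateFrom_eq_pi (C := fun _ => Set.range Set.Iic)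
    (fun _ => (borel_eq_generateFrom_Iic ℝ).symm.trans BorelSpace.measurable_eq.symm)
    fun _ => isCountablySpanning_range_Iic_real]
  congr 1
  ext s
  constructor
  · rintro ⟨t, ht, rfl⟩
    choose a ha using fun i => ht i (Set.mem_univ i)
    exact ⟨a, by rw [← Set.pi_univ_Iic]; simp only [ha]⟩
  · rintro ⟨a, rfl⟩
    exact ⟨fun i => Set.Iic (a i), fun i _ => ⟨a i, rfl⟩, Set.pi_univ_Iic a⟩

lemma isPiSystem_range_Iic (γ : Type*) [SemilatticeInf γ] :
    IsPiSystem (Set.range (Set.Iic : γ → Set γ)) := by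
  rintro _ ⟨a, rfl⟩ _ ⟨b, rfl⟩ -
  exact ⟨a ⊓ b, Set.Iic_inter_Iic.symm⟩

theorem ProbabilityTheory.indepFun_iff_measure_inter_preimage_Iic_eq_mul
    {Ω α β : Type*} [MeasurableSpace Ω] {μ : Measure Ω} [IsZeroOrProbabilityMeasure μ]
    [Finite α] [Finite β] {f : Ω → α → ℝ} {g : Ω → β → ℝ} (hf : Measurable f)
    (hg : Measurable g) :
    IndepFun f g μ ↔ ∀ a b, μ (f ⁻¹' Set.Iic a ∩ g ⁻¹' Set.Iic b)
      = μ (f ⁻¹' Set.Iic a) * μ (g ⁻¹' Set.Iic b) := by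
  refine ⟨fun h a b => h.measure_inter_preimage_eq_mul _ _ measurableSet_Iic measurableSet_Iic,
    fun h => ?_⟩
  rw [IndepFun_iff_Indep, MeasurableSpace.pi_eq_generateFrom_range_Iic,
    MeasurableSpace.pi_eq_generateFrom_range_Iic, MeasurableSpace.comap_generateFrom,
    MeasurableSpace.comap_generateFrom]
  refine IndepSets.indep' ?_ ?_ ((isPiSystem_range_Iic (α → ℝ)).comap f)
    ((isPiSystem_range_Iic (β → ℝ)).comap g) ?_
  · rintro _ ⟨_, ⟨a, rfl⟩, rfl⟩
    exact hf measurableSet_Iic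
  · rintro _ ⟨_, ⟨b, rfl⟩, rfl⟩
    exact hg measurableSet_Iic
  · rw [IndepSets_iff]
    rintro _ _ ⟨_, ⟨a, rfl⟩, rfl⟩ ⟨_, ⟨b, rfl⟩, rfl⟩
    exact h a b

section Subvectors

variable {Ω ι : Type*} {X : Ω → ι → ℝ}

lemma preimage_Iic_subvector {J : Finset ι} {a : J → ℝ} {x : ι → ℝ}
    (hx : ∀ i : J, x i = a i) :
    (fun ω (i : J) => X ω i) ⁻¹' Set.Iic a = {ω | ∀ i ∈ J, X ω i ≤ x i} := by
  ext ω
  simp [Pi.le_def, ← hx]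

lemma setOf_forall_mem_union_le [DecidableEq ι] (A B : Finset ι) (x : ι → ℝ) :
    {ω | ∀ i ∈ A ∪ B, X ω i ≤ x i}
      = {ω | ∀ i ∈ A, X ω i ≤ x i} ∩ {ω | ∀ i ∈ B, X ω i ≤ x i} := by
  ext ω
  simp [or_imp, forall_and]

lemma setOf_forall_le_congr {J : Finset ι} {x y : ι → ℝ} (h : ∀ i ∈ J, x i = y i) :
    {ω | ∀ i ∈ J, X ω i ≤ x i} = {ω | ∀ i ∈ J, X ω i ≤ y i} :=
  Set.ext fun _ => forall₂_congr fun i hi => by rw [h i hi]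

theorem indepFun_subvectors_iff [MeasurableSpace Ω] {μ : Measure Ω}
    [IsZeroOrProbabilityMeasure μ] [DecidableEq ι]
    (hX : ∀ i, Measurable fun ω => X ω i) {A B : Finset ι} (hAB : Disjoint A B) :
    IndepFun (fun ω (i : A) => X ω i) (fun ω (i : B) => X ω i) μ ↔ ∀ x : ι → ℝ,
      μ {ω | ∀ i ∈ A ∪ B, X ω i ≤ x i}
        = μ {ω | ∀ i ∈ A, X ω i ≤ x i} * μ {ω | ∀ i ∈ B, X ω i ≤ x i} := by
  rw [indepFun_iff_measure_inter_preimage_Iic_eq_mul (α := A) (β := B)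
    (measurable_pi_lambda _ fun i => hX i) (measurable_pi_lambda _ fun i => hX i)]
  refine ⟨fun h x => ?_, fun h a b => ?_⟩
  · rw [setOf_forall_mem_union_le, ← preimage_Iic_subvector (a := fun i : A => x i) fun _ => rfl,
      ← preimage_Iic_subvector (a := fun i : B => x i) fun _ => rfl]
    exact h _ _
  · let x : ι → ℝ := fun i =>
      if hA : i ∈ A then a ⟨i, hA⟩ else if hB : i ∈ B then b ⟨i, hB⟩ else 0
    have hxA : ∀ i : A, x i = a i := fun i => dif_pos i.2
    have hxB : ∀ i : B, x i = b i := fun i =>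
      (dif_neg (Finset.disjoint_right.mp hAB i.2)).trans (dif_pos i.2)
    rw [preimage_Iic_subvector hxA, preimage_Iic_subvector hxB, ← setOf_forall_mem_union_le]
    exact h x

end Subvectors

section PositiveThresholds

variable {Ω ι : Type*} [MeasurableSpace Ω] {μ : Measure Ω} {X : Ω → ι → ℝ}

lemma measure_setOf_forall_le_eq_zero (hnull : ∀ i, μ {ω | X ω i ≤ 0} = 0) {J : Finset ι}
    {x : ι → ℝ} {i : ι} (hi : i ∈ J) (hxi : x i ≤ 0) :
    μ {ω | ∀ j ∈ J, X ω j ≤ x j} = 0 :=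
  measure_mono_null (fun _ hω => (hω i hi).trans hxi) (hnull i)

-- Where a threshold in `A ∪ B` is nonpositive both sides vanish; otherwise the thresholds
-- outside `A ∪ B` are irrelevant and may be raised to `1`.
lemma forall_measure_union_eq_mul_iff_of_pos [DecidableEq ι]
    (hnull : ∀ i, μ {ω | X ω i ≤ 0} = 0) (A B : Finset ι) :
    (∀ x : ι → ℝ, μ {ω | ∀ i ∈ A ∪ B, X ω i ≤ x i}
        = μ {ω | ∀ i ∈ A, X ω i ≤ x i} * μ {ω | ∀ i ∈ B, X ω i ≤ x i}) ↔
      ∀ x : ι → ℝ, (∀ i, 0 < x i) → μ {ω | ∀ i ∈ A ∪ B, X ω i ≤ x i}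
        = μ {ω | ∀ i ∈ A, X ω i ≤ x i} * μ {ω | ∀ i ∈ B, X ω i ≤ x i} := by
  refine ⟨fun h x _ => h x, fun h x => ?_⟩
  by_cases hx : ∀ i ∈ A ∪ B, 0 < x i
  · let y := (A ∪ B).piecewise x 1
    have hy : ∀ i, 0 < y i := fun i => by
      by_cases hi : i ∈ A ∪ B
      · simpa [y, hi] using hx i hi
      · simp [y, hi]
    have hxy {J : Finset ι} (hJ : J ⊆ A ∪ B) :
        {ω | ∀ i ∈ J, X ω i ≤ x i} = {ω | ∀ i ∈ J, X ω i ≤ y i} :=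
      setOf_forall_le_congr fun i hi => (Finset.piecewise_eq_of_mem _ _ _ (hJ hi)).symm
    rw [hxy subset_rfl, hxy subset_union_left, hxy subset_union_right]
    exact h y hy
  · push Not at hx
    obtain ⟨i, hi, hxi⟩ := hx
    rw [measure_setOf_forall_le_eq_zero hnull hi hxi]
    rcases Finset.mem_union.1 hi with hiA | hiB
    · rw [measure_setOf_forall_le_eq_zero hnull hiA hxi, zero_mul]
    · rw [measure_setOf_forall_le_eq_zero hnull hiB hxi, mul_zero]

end PositiveThresholds

def HasMaxStableCDF {Ω ι : Type*} [MeasurableSpace Ω] (μ : Measure Ω) (X : Ω → ι → ℝ)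
    (H : Measure (ι → ℝ)) : Prop :=
  ∀ J : Finset ι, J.Nonempty → ∀ x : ι → ℝ, (∀ i, 0 < x i) →
    μ {ω | ∀ i ∈ J, X ω i ≤ x i}
      = ENNReal.ofReal (Real.exp (-(∫ ω', fmax J (fun i => ω' i / x i) ∂H)))

section MaxStable

variable {Ω ι : Type*} [MeasurableSpace Ω] {μ : Measure Ω} {X : Ω → ι → ℝ}
  {H : Measure (ι → ℝ)}

lemma fmax_singleton (i : ι) (a : ι → ℝ) : fmax {i} a = max (a i) 0 := by
  simp [fmax]

lemma integral_fmax_singleton_div (hpos : ∀ᵐ ω ∂H, ∀ i, 0 ≤ ω i)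
    (hmom : ∀ i, ∫ ω, ω i ∂H = 1) {x : ι → ℝ} {i : ι} (hxi : 0 ≤ x i) :
    ∫ ω, fmax {i} (fun j => ω j / x j) ∂H = (x i)⁻¹ := by
  have h : (fun ω : ι → ℝ => fmax {i} fun j => ω j / x j) =ᵐ[H] fun ω => ω i / x i := by
    filter_upwards [hpos] with ω hω
    rw [fmax_singleton, max_eq_left (div_nonneg (hω i) hxi)]
  rw [integral_congr_ae h, integral_div, hmom, one_div]

lemma measure_le_eq_ofReal_exp_neg_inv (hpos : ∀ᵐ ω ∂H, ∀ i, 0 ≤ ω i)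
    (hmom : ∀ i, ∫ ω, ω i ∂H = 1) (hdist : HasMaxStableCDF μ X H) (i : ι) {t : ℝ}
    (ht : 0 < t) :
    μ {ω | X ω i ≤ t} = ENNReal.ofReal (Real.exp (-t⁻¹)) := by
  have h := hdist {i} (singleton_nonempty i) (fun _ => t) fun _ => ht
  rw [integral_fmax_singleton_div hpos hmom ht.le] at h
  simpa only [Finset.mem_singleton, forall_eq] using h

lemma measure_le_zero_eq_zero (hpos : ∀ᵐ ω ∂H, ∀ i, 0 ≤ ω i)
    (hmom : ∀ i, ∫ ω, ω i ∂H = 1) (hdist : HasMaxStableCDF μ X H) (i : ι) :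
    μ {ω | X ω i ≤ 0} = 0 := by
  have hlim : Filter.Tendsto (fun t : ℝ => ENNReal.ofReal (Real.exp (-t⁻¹)))
      (nhdsWithin 0 (Set.Ioi 0)) (nhds 0) := by
    rw [← ENNReal.ofReal_zero]
    exact ENNReal.tendsto_ofReal
      (Real.tendsto_exp_neg_atTop_nhds_zero.comp tendsto_inv_nhdsGT_zero)
  refine le_antisymm (ge_of_tendsto hlim ?_) zero_le
  filter_upwards [self_mem_nhdsWithin] with t ht
  rw [← measure_le_eq_ofReal_exp_neg_inv hpos hmom hdist i ht]
  exact measure_mono fun ω (hω : X ω i ≤ 0) => (hω.trans ht.le : X ω i ≤ t)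

lemma ENNReal.ofReal_exp_neg_eq_mul_iff (a b c : ℝ) :
    ENNReal.ofReal (Real.exp (-c))
        = ENNReal.ofReal (Real.exp (-a)) * ENNReal.ofReal (Real.exp (-b)) ↔ a + b = c := by
  rw [← ENNReal.ofReal_mul (Real.exp_nonneg _), ← Real.exp_add,
    ENNReal.ofReal_eq_ofReal_iff (Real.exp_nonneg _) (Real.exp_nonneg _), Real.exp_eq_exp]
  constructor <;> intro h <;> linarith

end MaxStable

theorem maxStable_indep_iff_additive_general {Ω : Type*} [MeasurableSpace Ω]
    (μ : Measure Ω) [IsProbabilityMeasure μ]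
    {ι : Type*} [DecidableEq ι]
    (X : Ω → ι → ℝ) (hXm : ∀ i, Measurable fun ω => X ω i)
    (H : Measure (ι → ℝ))
    (hpos : ∀ᵐ ω ∂H, ∀ i, 0 ≤ ω i)
    (hmom : ∀ i, (∫ ω, ω i ∂H) = 1)
    (hdist : ∀ (J : Finset ι), J.Nonempty → ∀ x : ι → ℝ, (∀ i, 0 < x i) →
      μ {ω | ∀ i ∈ J, X ω i ≤ x i}
        = ENNReal.ofReal (Real.exp (-(∫ ω', fmax J (fun i => ω' i / x i) ∂H))))
    (A B : Finset ι) (hA : A.Nonempty) (hB : B.Nonempty) (hAB : Disjoint A B) :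
    IndepFun (fun ω => fun i : A => X ω i) (fun ω => fun i : B => X ω i) μ
      ↔ ∀ x : ι → ℝ, (∀ i, 0 < x i) →
          (∫ ω', fmax A (fun i => ω' i / x i) ∂H) + (∫ ω', fmax B (fun i => ω' i / x i) ∂H)
            = ∫ ω', fmax (A ∪ B) (fun i => ω' i / x i) ∂H := by
  rw [indepFun_subvectors_iff hXm hAB,
    forall_measure_union_eq_mul_iff_of_pos (measure_le_zero_eq_zero hpos hmom hdist) A B]
  refine forall₂_congr fun x hx => ?_
  rw [hdist _ hA.inl x hx, hdist A hA x hx, hdist B hB x hx]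
  exact ENNReal.ofReal_exp_neg_eq_mul_iff _ _ _

/-- For a simple max-stable random vector `X` with exponent functions
`V^J(x) = ∫ max_{i∈J} ω_i/x_i dH` (i.e. `P(X_J ≤ x_J) = exp(−V^J(x_J))` for a spectral
measure `H` with unit moments), the subvectors `X_A` and `X_B` (disjoint nonempty `A, B`)
are independent if and only if `V^A(x_A) + V^B(x_B) = V^{A∪B}(x_{A∪B})` for all `x > 0`. -/
theorem maxStable_indep_iff_additive {Ω : Type*} [MeasurableSpace Ω]
    (μ : Measure Ω) [IsProbabilityMeasure μ]
    {ι : Type*} [Fintype ι] [DecidableEq ι] [Nonempty ι]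
    (X : Ω → ι → ℝ) (hXm : ∀ i, Measurable fun ω => X ω i)
    (H : Measure (ι → ℝ)) [IsFiniteMeasure H]
    (hpos : ∀ᵐ ω ∂H, ∀ i, 0 ≤ ω i)
    (hint : ∀ i, Integrable (fun ω => ω i) H)
    (hmom : ∀ i, (∫ ω, ω i ∂H) = 1)
    (hdist : ∀ (J : Finset ι), J.Nonempty → ∀ x : ι → ℝ, (∀ i, 0 < x i) →
      μ {ω | ∀ i ∈ J, X ω i ≤ x i}
        = ENNReal.ofReal (Real.exp (-(∫ ω', fmax J (fun i => ω' i / x i) ∂H))))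
    (A B : Finset ι) (hA : A.Nonempty) (hB : B.Nonempty) (hAB : Disjoint A B) :
    IndepFun (fun ω => fun i : A => X ω i) (fun ω => fun i : B => X ω i) μ
      ↔ ∀ x : ι → ℝ, (∀ i, 0 < x i) →
          (∫ ω', fmax A (fun i => ω' i / x i) ∂H) + (∫ ω', fmax B (fun i => ω' i / x i) ∂H)
            = ∫ ω', fmax (A ∪ B) (fun i => ω' i / x i) ∂H :=
  maxStable_indep_iff_additive_general μ X hXm H hpos hmom hdist A B hA hB hAB
end

section
/- Let f : (0,∞)^I → ℝ be nonnegative and homogeneous of order −1 (f(t^{-1}x) = t·f(x) for t > 0), and let g : (0,∞)^I → ℝ be a finite sum of finite products of functions, where each factor in each product is homogeneous of some order −(k+1) with k ≥ 1 an integer, divided by another such sum-of-products that is nonvanishing. If exp(f(x)) = g(x) for all x ∈ (0,∞)^I, then f ≡ 0. -/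
/-!
Fix `x` in the positive orthant and put `c = f x`. Along the ray `t ↦ t⁻¹ • x` every product of
homogeneous factors is a monomial in `t`, so numerator and denominator become polynomials `N`, `D`
in `t`, and the hypothesis reads `exp (c * t) * D t = N t` for all `t > 0`. For `c ≠ 0` this is
impossible: an exponential outgrows every polynomial (swap `N` and `D` when `c < 0`).
-/

open Finset Filter Asymptotics Polynomial

namespace Polynomial

theorem isBigO_atTop_pow_natDegree (P : ℝ[X]) :
    P.eval =O[atTop] fun t => t ^ P.natDegree :=
  P.isEquivalent_atTop_lead.isBigO.trans (isBigO_const_mul_self _ _ _)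

theorem not_eventually_exp_mul_eval_eq_eval {c : ℝ} (hc : 0 < c) {P Q : ℝ[X]} (hQ : Q ≠ 0) :
    ¬∀ᶠ t in atTop, Real.exp (c * t) * Q.eval t = P.eval t := by
  intro h
  have hone : (fun _ : ℝ => (1 : ℝ)) =O[atTop] Q.eval := by
    simpa using isBigO_atTop_of_degree_le (C 1) Q (by simpa using zero_le_degree_iff.2 hQ)
  have hexp : (fun t => Real.exp (c * t)) =O[atTop] P.eval :=
    calc (fun t => Real.exp (c * t)) = fun t => Real.exp (c * t) * 1 := by simp only [mul_one]
      _ =O[atTop] fun t => Real.exp (c * t) * Q.eval t := (isBigO_refl _ _).mul hone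
      _ =ᶠ[atTop] P.eval := h
  exact isLittleO_irrefl (.of_forall fun t => (Real.exp_pos _).ne')
    (hexp.trans_isLittleO (P.isBigO_atTop_pow_natDegree.trans_isLittleO
      (isLittleO_pow_exp_pos_mul_atTop _ hc)))

theorem eq_zero_of_eventually_exp_mul_eval_eq_eval {c : ℝ} {P Q : ℝ[X]} (hP : P ≠ 0)
    (hQ : Q ≠ 0) (h : ∀ᶠ t in atTop, Real.exp (c * t) * Q.eval t = P.eval t) : c = 0 := by
  rcases lt_trichotomy c 0 with hc | hc | hc
  · refine absurd ?_ (not_eventually_exp_mul_eval_eq_eval (P := Q) (neg_pos.2 hc) hP)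
    filter_upwards [h] with t ht
    rw [← ht, ← mul_assoc, ← Real.exp_add, neg_mul, neg_add_cancel, Real.exp_zero, one_mul]
  · exact hc
  · exact absurd h (not_eventually_exp_mul_eval_eq_eval hc hQ)

end Polynomial

section SumProd

variable {α β : Type*}

noncomputable def sumProdPoly (s : Finset α) (ts : α → Finset β) (c : α → β → ℝ)
    (m : α → β → ℕ) : ℝ[X] :=
  ∑ a ∈ s, C (∏ b ∈ ts a, c a b) * X ^ ∑ b ∈ ts a, m a b

theorem sum_prod_eq_eval_sumProdPoly {E : Type*} {s : Finset α} {ts : α → Finset β}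
    {h : α → β → E → ℝ} {m : α → β → ℕ} {x y : E} {t : ℝ}
    (hy : ∀ a b, h a b y = t ^ m a b * h a b x) :
    ∑ a ∈ s, ∏ b ∈ ts a, h a b y = (sumProdPoly s ts (fun a b => h a b x) m).eval t := by
  simp only [sumProdPoly, eval_finsetSum, eval_mul, eval_C, eval_pow, eval_X, hy,
    prod_mul_distrib, prod_pow_eq_pow_sum, mul_comm]

end SumProd

theorem homogeneity_forces_zero_general {ι : Type*}
    {α β α' β' : Type*}
    (f : (ι → ℝ) → ℝ)
    (hfhom : ∀ t : ℝ, 0 < t → ∀ x : ι → ℝ, (∀ i, 0 < x i) → f (t⁻¹ • x) = t * f x)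
    (s : Finset α) (ts : α → Finset β) (h : α → β → (ι → ℝ) → ℝ) (m : α → β → ℕ)
    (hhom : ∀ a b, ∀ t : ℝ, 0 < t → ∀ x : ι → ℝ, (∀ i, 0 < x i) →
      h a b (t⁻¹ • x) = t ^ m a b * h a b x)
    (s' : Finset α') (ts' : α' → Finset β') (h' : α' → β' → (ι → ℝ) → ℝ) (m' : α' → β' → ℕ)
    (hhom' : ∀ a b, ∀ t : ℝ, 0 < t → ∀ x : ι → ℝ, (∀ i, 0 < x i) →
      h' a b (t⁻¹ • x) = t ^ m' a b * h' a b x)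
    (hD : ∀ x : ι → ℝ, (∀ i, 0 < x i) → (∑ a ∈ s', ∏ b ∈ ts' a, h' a b x) ≠ 0)
    (heq : ∀ x : ι → ℝ, (∀ i, 0 < x i) →
      Real.exp (f x) = (∑ a ∈ s, ∏ b ∈ ts a, h a b x) / (∑ a ∈ s', ∏ b ∈ ts' a, h' a b x)) :
    ∀ x : ι → ℝ, (∀ i, 0 < x i) → f x = 0 := by
  intro x hx
  set N := sumProdPoly s ts (fun a b => h a b x) m
  set D := sumProdPoly s' ts' (fun a b => h' a b x) m'
  have hray (t : ℝ) (ht : 0 < t) : ∀ i, 0 < (t⁻¹ • x) i := fun i => smul_pos (inv_pos.2 ht) (hx i)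
  have hNt (t : ℝ) (ht : 0 < t) : ∑ a ∈ s, ∏ b ∈ ts a, h a b (t⁻¹ • x) = N.eval t :=
    sum_prod_eq_eval_sumProdPoly fun a b => hhom a b t ht x hx
  have hDt (t : ℝ) (ht : 0 < t) : ∑ a ∈ s', ∏ b ∈ ts' a, h' a b (t⁻¹ • x) = D.eval t :=
    sum_prod_eq_eval_sumProdPoly fun a b => hhom' a b t ht x hx
  have hD_ne (t : ℝ) (ht : 0 < t) : D.eval t ≠ 0 := hDt t ht ▸ hD _ (hray t ht)
  have hray_eq (t : ℝ) (ht : 0 < t) : Real.exp (f x * t) * D.eval t = N.eval t := by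
    rw [mul_comm (f x), ← hfhom t ht x hx, heq _ (hray t ht), hNt t ht, hDt t ht]
    exact div_mul_cancel₀ _ (hD_ne t ht)
  have hD0 : D ≠ 0 := fun h0 => hD_ne 1 one_pos (by simp [h0])
  have hN0 : N ≠ 0 := fun h0 => by
    simpa [h0, hD_ne 1 one_pos, Real.exp_ne_zero] using hray_eq 1 one_pos
  exact eq_zero_of_eventually_exp_mul_eval_eq_eval hN0 hD0 ((eventually_gt_atTop 0).mono hray_eq)

/-- Homogeneity argument: if `f ≥ 0` on the positive orthant is homogeneous of order `−1`
(`f(t⁻¹x) = t·f(x)`), and `exp ∘ f` coincides there with a ratio `N/D` where `N` and `D` are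
finite sums of finite products of factors, each factor homogeneous in the sense
`h(t⁻¹x) = t^m·h(x)` for some integer `m ≥ 2`, with `D` nonvanishing, then `f ≡ 0`. -/
theorem homogeneity_forces_zero {ι : Type*} [Fintype ι]
    {α β α' β' : Type*}
    (f : (ι → ℝ) → ℝ)
    (hf0 : ∀ x : ι → ℝ, (∀ i, 0 < x i) → 0 ≤ f x)
    (hfhom : ∀ t : ℝ, 0 < t → ∀ x : ι → ℝ, (∀ i, 0 < x i) → f (t⁻¹ • x) = t * f x)
    (s : Finset α) (ts : α → Finset β) (h : α → β → (ι → ℝ) → ℝ) (m : α → β → ℕ)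
    (hm : ∀ a b, 2 ≤ m a b)
    (hhom : ∀ a b, ∀ t : ℝ, 0 < t → ∀ x : ι → ℝ, (∀ i, 0 < x i) →
      h a b (t⁻¹ • x) = t ^ m a b * h a b x)
    (s' : Finset α') (ts' : α' → Finset β') (h' : α' → β' → (ι → ℝ) → ℝ) (m' : α' → β' → ℕ)
    (hm' : ∀ a b, 2 ≤ m' a b)
    (hhom' : ∀ a b, ∀ t : ℝ, 0 < t → ∀ x : ι → ℝ, (∀ i, 0 < x i) →
      h' a b (t⁻¹ • x) = t ^ m' a b * h' a b x)
    (hD : ∀ x : ι → ℝ, (∀ i, 0 < x i) → (∑ a ∈ s', ∏ b ∈ ts' a, h' a b x) ≠ 0)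
    (heq : ∀ x : ι → ℝ, (∀ i, 0 < x i) →
      Real.exp (f x) = (∑ a ∈ s, ∏ b ∈ ts a, h a b x) / (∑ a ∈ s', ∏ b ∈ ts' a, h' a b x)) :
    ∀ x : ι → ℝ, (∀ i, 0 < x i) → f x = 0 :=
  homogeneity_forces_zero_general f hfhom s ts h m hhom s' ts' h' m' hhom' hD heq
end

section
/- If (Y_1, …, Y_k) is a simple max-stable random vector (componentwise standard Fréchet margins with max-stability) whose components are pairwise independent, then Y_1, …, Y_k are jointly independent. -/
/-!
Let `F(x) = P(Y ≤ x)` and `A_i(n) = {Y_i > n x_i}`, so that `P(A_i(n)) = 1 - exp(-1/(n x_i))`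
lies between `t - t²` and `t` for `t = 1/(n x_i)`. The union bound and the second Bonferroni
inequality, whose pair terms factor by pairwise independence, squeeze `n · P(⋃ᵢ A_i(n))` to
`∑ᵢ 1/x_i`, while max-stability gives `F(x) = (1 - P(⋃ᵢ A_i(n)))^n` for every `n`. Hence
`F(x) = exp(-∑ᵢ 1/x_i) = ∏ᵢ P(Y_i ≤ x_i)`; if some `x_i ≤ 0`, both sides vanish. A law on `ℝ^k`
is determined by its values on the boxes `∏ᵢ (-∞, x_i]`, so the law of `Y` is the product of
its marginals.
-/

open MeasureTheory ProbabilityTheory Set Filter Topology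

theorem sub_sq_le_one_sub_exp_neg {t : ℝ} (ht : 0 ≤ t) : t - t ^ 2 ≤ 1 - Real.exp (-t) := by
  have h_exp : Real.exp (-t) ≤ (1 + t)⁻¹ := by
    rw [Real.exp_neg]
    exact inv_anti₀ (by positivity) (by linarith [Real.add_one_le_exp t])
  have h_inv : (1 + t)⁻¹ ≤ 1 - t + t ^ 2 := by
    rw [inv_le_iff_one_le_mul₀ (by positivity)]
    nlinarith [pow_nonneg ht 3]
  linarith

theorem sum_sub_sq_le_sum_one_sub_exp_neg {ι : Type*} {s : Finset ι} {t : ι → ℝ}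
    (ht : ∀ i ∈ s, 0 ≤ t i) :
    ∑ i ∈ s, t i - (∑ i ∈ s, t i) ^ 2 ≤ ∑ i ∈ s, (1 - Real.exp (-t i)) :=
  calc ∑ i ∈ s, t i - (∑ i ∈ s, t i) ^ 2 ≤ ∑ i ∈ s, (t i - t i ^ 2) := by
        rw [Finset.sum_sub_distrib]
        linarith [Finset.sum_sq_le_sq_sum_of_nonneg ht]
    _ ≤ _ := Finset.sum_le_sum fun i hi => sub_sq_le_one_sub_exp_neg (ht i hi)

theorem eq_exp_neg_of_pow_one_sub_eq {u : ℕ → ℝ} {c C f : ℝ}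
    (h_low : ∀ n, 0 < n → c / n - C / n ^ 2 ≤ u n) (h_up : ∀ n, 0 < n → u n ≤ c / n)
    (h_pow : ∀ n, 0 < n → (1 - u n) ^ n = f) : f = Real.exp (-c) := by
  have h_lim : Tendsto (fun n : ℕ => n * -u n) atTop (𝓝 (-c)) := by
    refine tendsto_of_tendsto_of_tendsto_of_le_of_le' tendsto_const_nhds
      (by simpa using tendsto_const_nhds.add (tendsto_const_div_atTop_nhds_zero_nat C))
      ?_ ?_
    all_goals
      filter_upwards [eventually_gt_atTop 0] with n hn
      have hn' : (0 : ℝ) < n := Nat.cast_pos.2 hn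
    · have := h_up n hn
      rw [le_div_iff₀ hn'] at this
      linarith
    · have h_scaled : n * (c / n - C / n ^ 2) = c - C / n := by field_simp
      nlinarith [h_low n hn]
  refine tendsto_nhds_unique (tendsto_const_nhds.congr' ?_)
    (Real.tendsto_one_add_pow_exp_of_tendsto h_lim)
  filter_upwards [eventually_gt_atTop 0] with n hn
  rw [← h_pow n hn, sub_eq_add_neg]

theorem ProbabilityTheory.IndepFun.measureReal_inter_preimage_eq_mul {Ω β γ : Type*}
    [MeasurableSpace Ω] [MeasurableSpace β] [MeasurableSpace γ] {μ : Measure Ω}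
    {f : Ω → β} {g : Ω → γ} (h : IndepFun f g μ) {s : Set β} {t : Set γ}
    (hs : MeasurableSet s) (ht : MeasurableSet t) :
    μ.real (f ⁻¹' s ∩ g ⁻¹' t) = μ.real (f ⁻¹' s) * μ.real (g ⁻¹' t) := by
  simp only [measureReal_def, h.measure_inter_preimage_eq_mul s t hs ht, ENNReal.toReal_mul]

theorem sum_measureReal_le_measureReal_biUnion_add_sum_offDiag {Ω ι : Type*}
    [MeasurableSpace Ω] {μ : Measure Ω} [IsFiniteMeasure μ] [DecidableEq ι] {A : ι → Set Ω}
    (hA : ∀ i, MeasurableSet (A i)) (s : Finset ι) :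
    ∑ i ∈ s, μ.real (A i) ≤
      μ.real (⋃ i ∈ s, A i) + ∑ p ∈ s.offDiag, μ.real (A p.1 ∩ A p.2) := by
  induction s using Finset.induction with
  | empty => simp
  | @insert a s ha ih =>
    have h_inter : μ.real (A a ∩ ⋃ i ∈ s, A i) ≤ ∑ i ∈ s, μ.real (A a ∩ A i) := by
      rw [inter_iUnion₂]
      exact measureReal_biUnion_finset_le s _
    have h_offDiag : ∑ i ∈ s, μ.real (A a ∩ A i) + ∑ p ∈ s.offDiag, μ.real (A p.1 ∩ A p.2)
        ≤ ∑ p ∈ (insert a s).offDiag, μ.real (A p.1 ∩ A p.2) := by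
      have h_disj : Disjoint ({a} ×ˢ s) s.offDiag :=
        Finset.disjoint_left.2 fun p hp hp' =>
          ha ((Finset.mem_singleton.1 (Finset.mem_product.1 hp).1) ▸ (Finset.mem_offDiag.1 hp').1)
      calc ∑ i ∈ s, μ.real (A a ∩ A i) + ∑ p ∈ s.offDiag, μ.real (A p.1 ∩ A p.2)
          = ∑ p ∈ s.offDiag ∪ {a} ×ˢ s, μ.real (A p.1 ∩ A p.2) := by
            rw [Finset.sum_union h_disj.symm, Finset.sum_product, Finset.sum_singleton, add_comm]
        _ ≤ _ := by
            rw [Finset.offDiag_insert ha]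
            exact Finset.sum_le_sum_of_subset_of_nonneg Finset.subset_union_left
              fun _ _ _ => measureReal_nonneg
    have := measureReal_union_add_inter' (μ := μ) (t := ⋃ i ∈ s, A i) (hA a)
      (h₂ := measure_ne_top μ _)
    rw [Finset.sum_insert ha, Finset.set_biUnion_insert]
    linarith

theorem sum_sub_sq_le_measureReal_iUnion {Ω ι : Type*} [MeasurableSpace Ω] {μ : Measure Ω}
    [IsFiniteMeasure μ] [Fintype ι] {A : ι → Set Ω} (hA : ∀ i, MeasurableSet (A i))
    (h_indep : Pairwise fun i j => μ.real (A i ∩ A j) = μ.real (A i) * μ.real (A j)) :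
    ∑ i, μ.real (A i) - (∑ i, μ.real (A i)) ^ 2 ≤ μ.real (⋃ i, A i) := by
  classical
  have h_pairs : ∑ p ∈ Finset.univ.offDiag, μ.real (A p.1 ∩ A p.2) ≤ (∑ i, μ.real (A i)) ^ 2 :=
    calc ∑ p ∈ Finset.univ.offDiag, μ.real (A p.1 ∩ A p.2)
        = ∑ p ∈ Finset.univ.offDiag, μ.real (A p.1) * μ.real (A p.2) :=
          Finset.sum_congr rfl fun p hp => h_indep (Finset.mem_offDiag.1 hp).2.2
      _ ≤ ∑ p : ι × ι, μ.real (A p.1) * μ.real (A p.2) :=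
          Finset.sum_le_sum_of_subset_of_nonneg (Finset.subset_univ _)
            fun _ _ _ => mul_nonneg measureReal_nonneg measureReal_nonneg
      _ = (∑ i, μ.real (A i)) ^ 2 := by rw [Fintype.sum_prod_type, sq, Finset.sum_mul_sum]
  have := sum_measureReal_le_measureReal_biUnion_add_sum_offDiag hA Finset.univ (μ := μ)
  simp only [Finset.mem_univ, iUnion_true] at this
  linarith

theorem sum_sub_two_mul_sq_le_measureReal_iUnion {Ω ι : Type*} [MeasurableSpace Ω]
    {μ : Measure Ω} [IsFiniteMeasure μ] [Fintype ι] {A : ι → Set Ω} {t : ι → ℝ}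
    (hA : ∀ i, MeasurableSet (A i))
    (h_indep : Pairwise fun i j => μ.real (A i ∩ A j) = μ.real (A i) * μ.real (A j))
    (ht : ∀ i, 0 ≤ t i) (hAt : ∀ i, μ.real (A i) = 1 - Real.exp (-t i)) :
    ∑ i, t i - 2 * (∑ i, t i) ^ 2 ≤ μ.real (⋃ i, A i) := by
  have h_union := sum_sub_sq_le_measureReal_iUnion hA h_indep
  have h_sum_low := sum_sub_sq_le_sum_one_sub_exp_neg fun i (_ : i ∈ Finset.univ) => ht i
  have h_sum_up : ∑ i, (1 - Real.exp (-t i)) ≤ ∑ i, t i :=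
    Finset.sum_le_sum fun i _ => by linarith [Real.one_sub_le_exp_neg (t i)]
  have h_sum_nonneg : 0 ≤ ∑ i, μ.real (A i) := Finset.sum_nonneg fun _ _ => measureReal_nonneg
  simp only [hAt] at h_union h_sum_nonneg
  nlinarith

def finiteSpanningSetsInRangeIic (ν : Measure ℝ) [IsFiniteMeasure ν] :
    ν.FiniteSpanningSetsIn (range Iic) where
  set n := Iic n
  set_mem _ := mem_range_self _
  finite _ := measure_lt_top _ _
  spanning := eq_univ_of_forall fun x => mem_iUnion.2 ⟨⌈x⌉₊, mem_Iic.2 (Nat.le_ceil x)⟩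

theorem iIndepFun_of_measure_le_eq_prod {Ω ι : Type*} [MeasurableSpace Ω] {μ : Measure Ω}
    [IsProbabilityMeasure μ] [Fintype ι] {X : ι → Ω → ℝ} (hX : ∀ i, Measurable (X i))
    (h : ∀ x : ι → ℝ, μ {ω | ∀ i, X i ω ≤ x i} = ∏ i, μ {ω | X i ω ≤ x i}) :
    iIndepFun X μ := by
  rw [iIndepFun_iff_map_fun_eq_pi_map fun i => (hX i).aemeasurable]
  refine (Measure.pi_eq_generateFrom (fun _ => (borel_eq_generateFrom_Iic ℝ).symm.trans
    BorelSpace.measurable_eq.symm) (fun _ => isPiSystem_Iic)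
    (fun _ => finiteSpanningSetsInRangeIic _) fun s hs => ?_).symm
  choose x hx using hs
  obtain rfl : s = fun i => Iic (x i) := funext fun i => (hx i).symm
  rw [Measure.map_apply (measurable_pi_lambda _ hX) (.univ_pi fun _ => measurableSet_Iic)]
  simp only [Measure.map_apply (hX _) measurableSet_Iic]
  simpa only [preimage, mem_univ_pi, mem_Iic] using h x

def IsStdFrechet {Ω : Type*} [MeasurableSpace Ω] (μ : Measure Ω) (Z : Ω → ℝ) : Prop :=
  ∀ y : ℝ, 0 < y → μ {ω | Z ω ≤ y} = ENNReal.ofReal (Real.exp (-(1 / y)))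

namespace IsStdFrechet

variable {Ω : Type*} [MeasurableSpace Ω] {μ : Measure Ω} {Z : Ω → ℝ}

theorem measure_le_of_nonpos (hZ : IsStdFrechet μ Z) {t : ℝ} (ht : t ≤ 0) :
    μ {ω | Z ω ≤ t} = 0 := by
  refine le_antisymm (ENNReal.le_of_forall_pos_le_add fun ε hε _ => ?_) zero_le
  have hε' : (0 : ℝ) < ε := hε
  have h_exp : Real.exp (-(1 / ε)) ≤ ε := by
    rw [Real.exp_neg, one_div]
    exact inv_le_of_inv_le₀ hε' (by linarith [Real.add_one_le_exp (ε : ℝ)⁻¹])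
  calc μ {ω | Z ω ≤ t} ≤ μ {ω | Z ω ≤ ε} :=
        measure_mono fun ω (hω : Z ω ≤ t) => hω.trans (ht.trans hε'.le)
    _ = ENNReal.ofReal (Real.exp (-(1 / ε))) := hZ ε hε'
    _ ≤ ENNReal.ofReal ε := ENNReal.ofReal_le_ofReal h_exp
    _ = 0 + ε := by simp

theorem measureReal_lt [IsProbabilityMeasure μ] (hZ : IsStdFrechet μ Z) (hZm : Measurable Z)
    {y : ℝ} (hy : 0 < y) : μ.real {ω | y < Z ω} = 1 - Real.exp (-(1 / y)) := by
  have h_compl : {ω | y < Z ω} = {ω | Z ω ≤ y}ᶜ := by ext; simp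
  rw [h_compl, probReal_compl_eq_one_sub (s := {ω | Z ω ≤ y}) (hZm measurableSet_Iic),
    measureReal_def, hZ y hy, ENNReal.toReal_ofReal (Real.exp_nonneg _)]

end IsStdFrechet

theorem measure_le_eq_exp_neg_sum {Ω ι : Type*} [MeasurableSpace Ω] {μ : Measure Ω}
    [IsProbabilityMeasure μ] [Fintype ι] {X : ι → Ω → ℝ} (hX : ∀ i, Measurable (X i))
    (h_frechet : ∀ i, IsStdFrechet μ (X i))
    (h_pairwise : Pairwise fun i j => IndepFun (X i) (X j) μ) {x : ι → ℝ} (hx : ∀ i, 0 < x i)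
    (h_maxstable : ∀ n : ℕ, 0 < n →
      μ {ω | ∀ i, X i ω ≤ n * x i} ^ n = μ {ω | ∀ i, X i ω ≤ x i}) :
    μ {ω | ∀ i, X i ω ≤ x i} = ENNReal.ofReal (Real.exp (-∑ i, 1 / x i)) := by
  set c := ∑ i, 1 / x i
  let A : ℕ → ι → Set Ω := fun n i => {ω | n * x i < X i ω}
  have hA : ∀ n i, MeasurableSet (A n i) := fun n i => hX i measurableSet_Ioi
  have h_tail : ∀ n, 0 < n → ∀ i, μ.real (A n i) = 1 - Real.exp (-(1 / x i / n)) := by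
    intro n hn i
    have hnx : (0 : ℝ) < n * x i := mul_pos (Nat.cast_pos.2 hn) (hx i)
    rw [(h_frechet i).measureReal_lt (hX i) hnx, div_div, mul_comm]
  have h_scale : ∀ n : ℕ, ∑ i, 1 / x i / n = c / n := fun n => (Finset.sum_div _ _ _).symm
  have h_up : ∀ n, 0 < n → μ.real (⋃ i, A n i) ≤ c / n := by
    intro n hn
    rw [← h_scale]
    refine (measureReal_iUnion_fintype_le _).trans (Finset.sum_le_sum fun i _ => ?_)
    linarith [h_tail n hn i, Real.one_sub_le_exp_neg (1 / x i / n)]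
  have h_low : ∀ n, 0 < n → c / n - 2 * c ^ 2 / n ^ 2 ≤ μ.real (⋃ i, A n i) := by
    intro n hn
    have := sum_sub_two_mul_sq_le_measureReal_iUnion (hA n)
      (fun i j hij => (h_pairwise hij).measureReal_inter_preimage_eq_mul
        measurableSet_Ioi measurableSet_Ioi)
      (fun i => by have := hx i; positivity) (h_tail n hn)
    rw [h_scale] at this
    linarith [show 2 * (c / n) ^ 2 = 2 * c ^ 2 / n ^ 2 by ring]
  have h_pow : ∀ n, 0 < n → (1 - μ.real (⋃ i, A n i)) ^ n = μ.real {ω | ∀ i, X i ω ≤ x i} := by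
    intro n hn
    have h_compl : {ω | ∀ i, X i ω ≤ n * x i} = (⋃ i, A n i)ᶜ := by ext; simp [A]
    rw [← probReal_compl_eq_one_sub (.iUnion (hA n)), ← h_compl, measureReal_def,
      ← ENNReal.toReal_pow, h_maxstable n hn, measureReal_def]
  rw [← ofReal_measureReal, eq_exp_neg_of_pow_one_sub_eq h_low h_up h_pow]

/-- If `(Y_1, …, Y_k)` is a simple max-stable random vector (standard Fréchet margins and
max-stability: `P(Y ≤ n·x)^n = P(Y ≤ x)`) whose components are pairwise independent, then
the components are jointly independent. -/
theorem pairwise_indep_implies_joint_indep {Ω : Type*} [MeasurableSpace Ω]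
    (μ : Measure Ω) [IsProbabilityMeasure μ] (k : ℕ)
    (Y : Ω → Fin k → ℝ) (hYm : ∀ i, Measurable fun ω => Y ω i)
    (hfrechet : ∀ i, ∀ y : ℝ, 0 < y →
      μ {ω | Y ω i ≤ y} = ENNReal.ofReal (Real.exp (-(1 / y))))
    (hmaxstable : ∀ n : ℕ, 0 < n → ∀ x : Fin k → ℝ, (∀ i, 0 < x i) →
      μ {ω | ∀ i, Y ω i ≤ (n : ℝ) * x i} ^ n = μ {ω | ∀ i, Y ω i ≤ x i})
    (hpairwise : ∀ i j : Fin k, i ≠ j → IndepFun (fun ω => Y ω i) (fun ω => Y ω j) μ) :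
    iIndepFun
      (fun i ω => Y ω i) μ := by
  refine iIndepFun_of_measure_le_eq_prod hYm fun x => ?_
  by_cases hx : ∀ i, 0 < x i
  · rw [measure_le_eq_exp_neg_sum hYm hfrechet hpairwise hx (hmaxstable · · x hx),
      ← Finset.sum_neg_distrib, Real.exp_sum,
      ENNReal.ofReal_prod_of_nonneg fun i _ => (Real.exp_nonneg _)]
    exact Finset.prod_congr rfl fun i _ => (hfrechet i (x i) (hx i)).symm
  · obtain ⟨i, hi⟩ := not_forall.1 hx
    have h_null := IsStdFrechet.measure_le_of_nonpos (hfrechet i) (not_lt.1 hi)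
    rw [measure_mono_null (s := {ω | ∀ j, Y ω j ≤ x j}) (fun ω hω => hω i) h_null,
      Finset.prod_eq_zero (Finset.mem_univ i) h_null]
end

section
/- Möbius inversion for exponent functions: defining d_A(x) := Σ_{B ⊇ A^c, B ≠ ∅} (-1)^{|B∩A|+1} V^B(x_B) for each nonempty A ⊆ I, one recovers V^A(x_A) = Σ_{B ⊆ I, B ∩ A ≠ ∅} d_B(x) for every nonempty A ⊆ I and x ∈ (0,∞)^I. -/
/-!
After exchanging the two sums, the coefficient of `V^S` (for nonempty `S`) is the alternating
sum of `(-1)^(|S ∩ B| + 1)` over the sets `B ⊇ Sᶜ` meeting `A`. The alternating sum over the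
whole Boolean interval `[Sᶜ, univ]` vanishes, so this coefficient equals the alternating sum over
the sets of that interval avoiding `A`, i.e. over `[Sᶜ, Aᶜ]`, which is `1` if `S = A` and `0`
otherwise.
-/

open Finset MeasureTheory

variable {ι : Type*} [Fintype ι] [DecidableEq ι]

/-- Exponent function `V^A(x_A) = ∫ max_{i∈A} ω_i/x_i dH`. -/
noncomputable def Vexp (H : Measure (ι → ℝ)) (x : ι → ℝ) (A : Finset ι) : ℝ :=
  ∫ ω, fmax A (fun i => ω i / x i) ∂H

/-- Möbius inversion `d_A(x) = Σ_{B ⊇ Aᶜ, B ≠ ∅} (-1)^(|B∩A|+1) V^B(x_B)`. -/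
noncomputable def dA (H : Measure (ι → ℝ)) (x : ι → ℝ) (A : Finset ι) : ℝ :=
  ∑ B ∈ Finset.univ.powerset.filter (fun B => Aᶜ ⊆ B ∧ B.Nonempty),
    (-1 : ℝ) ^ ((B ∩ A).card + 1) * Vexp H x B

/-- `χ_A(x_A) = Σ_{∅ ≠ B ⊆ A} (-1)^(|B|+1) V^B(x_B)`. -/
noncomputable def chiA (H : Measure (ι → ℝ)) (x : ι → ℝ) (A : Finset ι) : ℝ :=
  ∑ B ∈ A.powerset.filter Finset.Nonempty,
    (-1 : ℝ) ^ (B.card + 1) * Vexp H x B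

theorem Finset.sum_Icc_eq_sum_powerset_sdiff {α M : Type*} [DecidableEq α] [AddCommMonoid M]
    {s t : Finset α} (hst : s ⊆ t) (f : Finset α → M) :
    ∑ B ∈ Icc s t, f (B \ s) = ∑ u ∈ (t \ s).powerset, f u := by
  refine sum_nbij' (· \ s) (s ∪ ·) ?_ ?_ ?_ ?_ fun _ _ => rfl
  · intro B hB
    simp only [mem_Icc, mem_powerset] at hB ⊢
    exact sdiff_subset_sdiff hB.2 le_rfl
  · intro u hu
    simp only [mem_Icc, mem_powerset] at hu ⊢
    exact ⟨subset_union_left, union_subset hst (hu.trans sdiff_subset)⟩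
  · intro B hB
    exact union_sdiff_of_subset (mem_Icc.mp hB).1
  · intro u hu
    exact union_sdiff_cancel_left (disjoint_sdiff.mono_right (mem_powerset.mp hu))

theorem Finset.sum_Icc_neg_one_pow_card_sdiff {α R : Type*} [DecidableEq α] [Ring R]
    (s t : Finset α) : ∑ B ∈ Icc s t, (-1 : R) ^ #(B \ s) = if s = t then 1 else 0 := by
  by_cases hst : s ⊆ t
  · have hpow := congrArg (Int.cast : ℤ → R) (sum_powerset_neg_one_pow_card (x := t \ s))
    push_cast at hpow
    rw [sum_Icc_eq_sum_powerset_sdiff hst (fun u => (-1 : R) ^ #u), hpow]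
    refine if_congr ?_ rfl rfl
    rw [sdiff_eq_empty_iff_subset]
    exact ⟨fun hts => hst.antisymm hts, fun h => h ▸ le_rfl⟩
  · rw [Icc_eq_empty hst, sum_empty, if_neg (fun h => hst h.le)]

theorem sum_Icc_compl_inter_nonempty_neg_one_pow {R : Type*} [Ring R] {S : Finset ι}
    (hS : S.Nonempty) (A : Finset ι) :
    ∑ B ∈ Icc Sᶜ univ with (B ∩ A).Nonempty, (-1 : R) ^ (#(S ∩ B) + 1)
      = if S = A then 1 else 0 := by
  have hcard (B : Finset ι) : #(S ∩ B) = #(B \ Sᶜ) := by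
    rw [sdiff_compl, inf_eq_inter, inter_comm]
  have htotal : ∑ B ∈ Icc Sᶜ univ, (-1 : R) ^ #(S ∩ B) = 0 := by
    simp only [hcard, sum_Icc_neg_one_pow_card_sdiff, compl_eq_univ_iff,
      hS.ne_empty, if_false]
  have hdisjoint : {B ∈ Icc Sᶜ univ | ¬(B ∩ A).Nonempty} = Icc Sᶜ Aᶜ := by
    ext B
    simp only [mem_filter, mem_Icc, subset_univ, and_true, subset_compl_iff_disjoint_right,
      disjoint_iff_inter_eq_empty, not_nonempty_iff_eq_empty]
  have hsplit := sum_filter_add_sum_filter_not (Icc Sᶜ univ) (fun B => (B ∩ A).Nonempty)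
    (fun B => (-1 : R) ^ #(S ∩ B))
  have hrest : ∑ B ∈ Icc Sᶜ univ with ¬(B ∩ A).Nonempty, (-1 : R) ^ #(S ∩ B)
      = if S = A then 1 else 0 := by
    rw [hdisjoint]
    simp only [hcard, sum_Icc_neg_one_pow_card_sdiff, compl_inj_iff]
  simp only [pow_succ, mul_neg_one, sum_neg_distrib]
  rw [neg_eq_iff_eq_neg, eq_neg_iff_add_eq_zero, ← hrest, hsplit, htotal]

theorem sum_inter_nonempty_sum_compl_subset_neg_one_pow_smul {R M : Type*} [Ring R]
    [AddCommGroup M] [Module R M] (V : Finset ι → M) {A : Finset ι} (hA : A.Nonempty) :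
    ∑ B ∈ univ.powerset.filter (fun B => (B ∩ A).Nonempty),
        ∑ B' ∈ univ.powerset.filter (fun B' => Bᶜ ⊆ B' ∧ B'.Nonempty),
          (-1 : R) ^ (#(B' ∩ B) + 1) • V B'
      = V A := by
  rw [sum_comm' (t' := univ.powerset.filter Finset.Nonempty)
    (s' := fun S => {B ∈ Icc Sᶜ univ | (B ∩ A).Nonempty}) (by
      intro B S
      simp only [mem_filter, mem_powerset, mem_Icc, subset_univ, true_and, and_true]
      rw [compl_le_iff_compl_le]
      tauto)]
  calc ∑ S ∈ univ.powerset.filter Finset.Nonempty,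
        ∑ B ∈ Icc Sᶜ univ with (B ∩ A).Nonempty, (-1 : R) ^ (#(S ∩ B) + 1) • V S
      = ∑ S ∈ univ.powerset.filter Finset.Nonempty, (if S = A then (1 : R) else 0) • V S := by
        refine sum_congr rfl fun S hS => ?_
        rw [← sum_smul, sum_Icc_compl_inter_nonempty_neg_one_pow (mem_filter.mp hS).2]
    _ = V A := by
        simp only [ite_smul, one_smul, zero_smul, sum_ite_eq', mem_filter, mem_powerset,
          subset_univ, true_and, hA, if_true]

theorem moebius_inversion_exponent_general
    (H : Measure (ι → ℝ))
    (x : ι → ℝ)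
    (A : Finset ι) (hA : A.Nonempty) :
    Vexp H x A
      = ∑ B ∈ Finset.univ.powerset.filter (fun B => (B ∩ A).Nonempty), dA H x B :=
  (sum_inter_nonempty_sum_compl_subset_neg_one_pow_smul (R := ℝ) (Vexp H x) hA).symm

/-- Möbius inversion for exponent functions: with
`d_B(x) = Σ_{B' ⊇ Bᶜ, B' ≠ ∅} (-1)^(|B'∩B|+1) V^{B'}(x)`, one recovers
`V^A(x_A) = Σ_{B ⊆ I, B ∩ A ≠ ∅} d_B(x)` for every nonempty `A ⊆ I` and `x > 0`. -/
theorem moebius_inversion_exponent [Nonempty ι]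
    (H : Measure (ι → ℝ)) [IsFiniteMeasure H]
    (hpos : ∀ᵐ ω ∂H, ∀ i, 0 ≤ ω i)
    (hint : ∀ i, Integrable (fun ω => ω i) H)
    (x : ι → ℝ) (hx : ∀ i, 0 < x i)
    (A : Finset ι) (hA : A.Nonempty) :
    Vexp H x A
      = ∑ B ∈ Finset.univ.powerset.filter (fun B => (B ∩ A).Nonempty), dA H x B :=
  moebius_inversion_exponent_general H x A hA
end

section
/- For disjoint nonempty A, B ⊆ I with C = I\(A∪B), the Möbius decomposition d_{A,B}(x) = Σ_{L ⊆ I : L∩A ≠ ∅, L∩B ≠ ∅, L∩C = ∅} d_L(x) holds, where d_{A,B}(x) = V^{A∪C}(x_{A∪C}) + V^{B∪C}(x_{B∪C}) − V^I(x) − V^C(x_C) and d_L is the Möbius inversion of the family (V^A). -/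
/-!
A set function `f` with `f ∅ = 0` is recovered from its Möbius inverse `d` as
`f D = ∑_{L ∩ D ≠ ∅} d L`: in the double sum, the coefficient of `f B` is an alternating sum
over a Boolean interval and equals `[B = D] - [B = ∅]`. Applied to the four exponent-function
terms, with `C = (A ∪ B)ᶜ`, the claim reduces for each `L` to the identity of indicators
`[L ∩ (A ∪ C) ≠ ∅] + [L ∩ (B ∪ C) ≠ ∅] - [L ∩ (A ∪ B ∪ C) ≠ ∅] - [L ∩ C ≠ ∅]`
`  = [L ∩ A ≠ ∅ ∧ L ∩ B ≠ ∅ ∧ L ∩ C = ∅]`.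
-/
open Finset MeasureTheory

variable {ι : Type*} [Fintype ι] [DecidableEq ι]

section Moebius

variable {M : Type*} [AddCommGroup M]

def moebiusInv (f : Finset ι → M) (L : Finset ι) : M :=
  ∑ B with Lᶜ ⊆ B, (-1 : ℤ) ^ (#(B ∩ L) + 1) • f B

lemma inter_compl_union_of_subset {B S : Finset ι} (h : S ⊆ B) : B ∩ (Bᶜ ∪ S) = S := by
  rw [inter_union_distrib_left, inter_compl, empty_union, inter_eq_right.2 h]

lemma sum_compl_subset_eq_sum_powerset (B : Finset ι) (g : Finset ι → M) :
    ∑ L with Bᶜ ⊆ L, g L = ∑ S ∈ B.powerset, g (Bᶜ ∪ S) := by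
  have h_union (L : Finset ι) (h : Bᶜ ⊆ L) : Bᶜ ∪ B ∩ L = L := by
    rw [union_inter_distrib_left, union_comm Bᶜ B, union_compl, univ_inter, union_eq_right.2 h]
  refine sum_nbij' (B ∩ ·) (Bᶜ ∪ ·) (by simp) (by simp)
    (fun L hL => h_union L (mem_filter.1 hL).2)
    (fun S hS => inter_compl_union_of_subset (mem_powerset.1 hS)) fun L hL => ?_
  rw [h_union L (mem_filter.1 hL).2]

lemma sum_powerset_neg_one_pow_card_of_disjoint (B D : Finset ι) :
    ∑ S ∈ B.powerset with Disjoint (Bᶜ ∪ S) D, (-1 : ℤ) ^ #S = if B = D then 1 else 0 := by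
  by_cases hDB : D ⊆ B
  · have hfilter : {S ∈ B.powerset | Disjoint (Bᶜ ∪ S) D} = (B \ D).powerset := by
      ext S
      simp only [mem_filter, mem_powerset, disjoint_union_left, subset_sdiff,
        disjoint_compl_left_iff, hDB, true_and]
    have hBD : B ⊆ D ↔ B = D := ⟨fun h => subset_antisymm h hDB, fun h => h.le⟩
    simp only [hfilter, sum_powerset_neg_one_pow_card, sdiff_eq_empty_iff_subset, hBD]
  · rw [sum_eq_zero, if_neg (by rintro rfl; exact hDB subset_rfl)]
    intro S hS
    simp only [mem_filter, disjoint_union_left, disjoint_compl_left_iff] at hS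
    exact absurd hS.2.1 hDB

/- With `L = Bᶜ ∪ S`, this is minus the alternating sum over all `S ⊆ B` plus the one over
`S ⊆ B \ D`, the latter being empty unless `D ⊆ B`. -/
lemma sum_neg_one_pow_card_inter_of_inter_nonempty (B D : Finset ι) :
    ∑ L with Bᶜ ⊆ L ∧ (L ∩ D).Nonempty, (-1 : ℤ) ^ (#(B ∩ L) + 1)
      = (if B = D then 1 else 0) - if B = ∅ then 1 else 0 := by
  calc ∑ L with Bᶜ ⊆ L ∧ (L ∩ D).Nonempty, (-1 : ℤ) ^ (#(B ∩ L) + 1)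
      = ∑ S ∈ B.powerset with ¬Disjoint (Bᶜ ∪ S) D, -(-1 : ℤ) ^ #S := by
        rw [← filter_filter, sum_filter, sum_compl_subset_eq_sum_powerset, sum_filter]
        refine sum_congr rfl fun S hS => ?_
        rw [inter_compl_union_of_subset (mem_powerset.1 hS), pow_succ, mul_neg_one]
        simp only [not_disjoint_iff_nonempty_inter]
    _ = -(∑ S ∈ B.powerset, (-1 : ℤ) ^ #S
          - ∑ S ∈ B.powerset with Disjoint (Bᶜ ∪ S) D, (-1 : ℤ) ^ #S) := by
        rw [sum_neg_distrib,
          ← sum_filter_add_sum_filter_not B.powerset (fun S => Disjoint (Bᶜ ∪ S) D)]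
        ring
    _ = _ := by
        rw [sum_powerset_neg_one_pow_card, sum_powerset_neg_one_pow_card_of_disjoint]
        ring

lemma sum_moebiusInv_of_inter_nonempty (f : Finset ι → M) (D : Finset ι) :
    ∑ L with (L ∩ D).Nonempty, moebiusInv f L = f D - f ∅ := by
  unfold moebiusInv
  rw [sum_comm' (t' := univ) (s' := fun B => {L | Bᶜ ⊆ L ∧ (L ∩ D).Nonempty})]
  · simp only [← sum_smul, sum_neg_one_pow_card_inter_of_inter_nonempty, sub_smul, ite_smul,
      one_smul, zero_smul, sum_sub_distrib, sum_ite_eq', mem_univ, if_true]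
  · intro L B
    simp only [mem_filter, mem_univ, true_and, and_true, compl_le_iff_compl_le (x := L)]
    tauto

lemma ite_or_add_ite_or_sub_ite_or_sub_ite {p q r : Prop}
    [Decidable p] [Decidable q] [Decidable r] (m : M) :
    (if p ∨ r then m else 0) + (if q ∨ r then m else 0) - (if (p ∨ q) ∨ r then m else 0)
      - (if r then m else 0) = if p ∧ q ∧ ¬r then m else 0 := by
  by_cases p <;> by_cases q <;> by_cases r <;> simp_all

end Moebius

omit [Fintype ι] [DecidableEq ι] in
lemma Vexp_empty (H : Measure (ι → ℝ)) (x : ι → ℝ) : Vexp H x ∅ = 0 := by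
  simp [Vexp, fmax]

lemma dA_eq_moebiusInv (H : Measure (ι → ℝ)) (x : ι → ℝ) (L : Finset ι) :
    dA H x L = moebiusInv (Vexp H x) L := by
  rw [dA, moebiusInv, powerset_univ, ← filter_filter, sum_filter_of_ne]
  · simp only [zsmul_eq_mul, Int.cast_pow, Int.cast_neg, Int.cast_one, inter_comm]
  · intro B _ hB
    exact nonempty_iff_ne_empty.2 fun hB₀ => hB (by rw [hB₀, Vexp_empty, mul_zero])

lemma Vexp_eq_sum_dA (H : Measure (ι → ℝ)) (x : ι → ℝ) (D : Finset ι) :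
    Vexp H x D = ∑ L with (L ∩ D).Nonempty, dA H x L := by
  simp only [dA_eq_moebiusInv, sum_moebiusInv_of_inter_nonempty, Vexp_empty, sub_zero]

theorem dAB_moebius_decomposition_general
    (H : Measure (ι → ℝ)) (x : ι → ℝ) (A B : Finset ι) :
    Vexp H x (A ∪ (A ∪ B)ᶜ) + Vexp H x (B ∪ (A ∪ B)ᶜ)
        - Vexp H x Finset.univ - Vexp H x ((A ∪ B)ᶜ)
      = ∑ L ∈ Finset.univ.powerset.filter
          (fun L => (L ∩ A).Nonempty ∧ (L ∩ B).Nonempty ∧ L ∩ (A ∪ B)ᶜ = ∅),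
          dA H x L := by
  have h_univ : Vexp H x univ = Vexp H x (A ∪ B ∪ (A ∪ B)ᶜ) := by rw [union_compl]
  rw [h_univ, powerset_univ]
  simp only [Vexp_eq_sum_dA, sum_filter, ← sum_add_distrib, ← sum_sub_distrib]
  refine sum_congr rfl fun L _ => ?_
  simp only [inter_union_distrib_left, union_nonempty, ← not_nonempty_iff_eq_empty]
  exact ite_or_add_ite_or_sub_ite_or_sub_ite _

/-- Möbius decomposition of `d_{A,B}`: for disjoint nonempty `A, B ⊆ I` with
`C = I \ (A∪B)`, `d_{A,B}(x) = V^{A∪C}(x) + V^{B∪C}(x) − V^I(x) − V^C(x)` equals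
`Σ_{L ⊆ I : L∩A ≠ ∅, L∩B ≠ ∅, L∩C = ∅} d_L(x)`. -/
theorem dAB_moebius_decomposition [Nonempty ι]
    (H : Measure (ι → ℝ)) [IsFiniteMeasure H]
    (hpos : ∀ᵐ ω ∂H, ∀ i, 0 ≤ ω i)
    (hint : ∀ i, Integrable (fun ω => ω i) H)
    (x : ι → ℝ) (hx : ∀ i, 0 < x i)
    (A B : Finset ι) (hA : A.Nonempty) (hB : B.Nonempty) (hAB : Disjoint A B) :
    Vexp H x (A ∪ (A ∪ B)ᶜ) + Vexp H x (B ∪ (A ∪ B)ᶜ)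
        - Vexp H x Finset.univ - Vexp H x ((A ∪ B)ᶜ)
      = ∑ L ∈ Finset.univ.powerset.filter
          (fun L => (L ∩ A).Nonempty ∧ (L ∩ B).Nonempty ∧ L ∩ (A ∪ B)ᶜ = ∅),
          dA H x L :=
  dAB_moebius_decomposition_general H x A B
end
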